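/- arXiv:math/0008220 — 4 statements merged into one kernel-verified Lean document; each statement's English description precedes it below -/
import Mathlib

section
/- For any two lattice points u, v in Z^2, the minimal length of an increasing lattice path from u to v differs by at most 1 from twice the sup-norm distance between u and v. -/
/-- The directed edge from `u` to `v` (a unit step in `ℤ × ℤ`) has a black
square on its left, where the unit square with lower-left corner `(x, y)` is
colored black iff `x + y` is odd.  An *increasing path* is a lattice path all
of whose steps satisfy this condition. -/
def blackLeft (u v : ℤ × ℤ) : Prop :=
  (Odd (u.1 + u.2) ∧ (v = (u.1 + 1, u.2) ∨ v = (u.1 - 1, u.2))) ∨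
  (Even (u.1 + u.2) ∧ (v = (u.1, u.2 + 1) ∨ v = (u.1, u.2 - 1)))

/-- The set of lengths of increasing lattice paths from `u` to `v`
(paths are not restricted to lie in any region). -/
def incPathLengths (u v : ℤ × ℤ) : Set ℕ :=
  {n | ∃ p : ℕ → ℤ × ℤ, p 0 = u ∧ p n = v ∧
    ∀ i < n, blackLeft (p i) (p (i + 1))}

/-!
A step from a square of odd colour `x + y` is horizontal and one from an even square is vertical,
and every step flips the colour, so the steps of an increasing path alternate between horizontal
and vertical. Two consecutive steps therefore move each coordinate by at most one, which gives
`2 d ≤ n + 1` for a path of length `n` between points at sup-distance `d`. Conversely, a pair of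
consecutive steps can realise any diagonal move `(±1, ±1)`, so points of the same colour at
sup-distance `d` are joined by a path of length `2 d`; otherwise one step first towards the target
reduces to that case, at total length at most `2 d + 1`.
-/

theorem blackLeft_iff {u v : ℤ × ℤ} :
    blackLeft u v ↔
      (u.1 + u.2) % 2 = 1 ∧ (v.1 - u.1).natAbs = 1 ∧ v.2 = u.2 ∨
      (u.1 + u.2) % 2 = 0 ∧ v.1 = u.1 ∧ (v.2 - u.2).natAbs = 1 := by
  simp only [blackLeft, Int.odd_iff, Int.even_iff, Prod.ext_iff]
  omega

theorem zero_mem_incPathLengths_iff {u v : ℤ × ℤ} : 0 ∈ incPathLengths u v ↔ u = v := by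
  constructor
  · rintro ⟨p, rfl, rfl, -⟩; rfl
  · rintro rfl; exact ⟨fun _ => u, rfl, rfl, by simp⟩

theorem succ_mem_incPathLengths_iff {u v : ℤ × ℤ} {n : ℕ} :
    n + 1 ∈ incPathLengths u v ↔ ∃ w, blackLeft u w ∧ n ∈ incPathLengths w v := by
  constructor
  · rintro ⟨p, rfl, hpn, hp⟩
    exact ⟨p 1, hp 0 n.succ_pos, fun i => p (i + 1), rfl, hpn,
      fun i hi => hp (i + 1) (by omega)⟩
  · rintro ⟨w, huw, q, rfl, hqn, hq⟩
    refine ⟨fun | 0 => u | i + 1 => q i, rfl, hqn, ?_⟩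
    rintro (_ | i) hi
    · exact huw
    · exact hq i (by omega)

theorem add_mem_incPathLengths {u w v : ℤ × ℤ} {m n : ℕ} (huw : m ∈ incPathLengths u w)
    (hwv : n ∈ incPathLengths w v) : m + n ∈ incPathLengths u v := by
  induction m generalizing u with
  | zero => rwa [zero_mem_incPathLengths_iff.1 huw, zero_add]
  | succ m ih =>
    obtain ⟨x, hux, hxw⟩ := succ_mem_incPathLengths_iff.1 huw
    rw [add_right_comm]
    exact succ_mem_incPathLengths_iff.2 ⟨x, hux, ih hxw⟩

def supDist (u v : ℤ × ℤ) : ℕ := max (u.1 - v.1).natAbs (u.2 - v.2).natAbs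

theorem cast_supDist (u v : ℤ × ℤ) :
    (supDist u v : ℤ) = max |u.1 - v.1| |u.2 - v.2| := by
  simp [supDist]

theorem supDist_triangle (u w v : ℤ × ℤ) : supDist u v ≤ supDist u w + supDist w v := by
  unfold supDist; omega

theorem supDist_le_one_of_blackLeft {u v : ℤ × ℤ} (h : blackLeft u v) : supDist u v ≤ 1 := by
  rw [blackLeft_iff] at h; unfold supDist; omega

theorem supDist_le_one_of_blackLeft_of_blackLeft {u v w : ℤ × ℤ} (huv : blackLeft u v)
    (hvw : blackLeft v w) : supDist u w ≤ 1 := by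
  rw [blackLeft_iff] at huv hvw; unfold supDist; omega

theorem two_mul_supDist_le_of_mem_incPathLengths {u v : ℤ × ℤ} {n : ℕ}
    (h : n ∈ incPathLengths u v) : 2 * supDist u v ≤ n + 1 := by
  induction n using Nat.twoStepInduction generalizing u with
  | zero => simp [zero_mem_incPathLengths_iff.1 h, supDist]
  | one =>
    obtain ⟨w, huw, hw⟩ := succ_mem_incPathLengths_iff.1 h
    rw [← zero_mem_incPathLengths_iff.1 hw]
    have huw_le := supDist_le_one_of_blackLeft huw
    omega
  | more n ih _ =>
    obtain ⟨w, huw, hw⟩ := succ_mem_incPathLengths_iff.1 h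
    obtain ⟨x, hwx, hx⟩ := succ_mem_incPathLengths_iff.1 hw
    have hux := supDist_le_one_of_blackLeft_of_blackLeft huw hwx
    have htri := supDist_triangle u x v
    have hxv := ih hx
    omega

theorem exists_unit_step_toward (a b : ℤ) :
    ∃ c, (c - a).natAbs = 1 ∧ (a = b ∨ (b - c).natAbs + 1 = (b - a).natAbs) := by
  rcases lt_or_ge a b with h | h
  · exact ⟨a + 1, by omega, by omega⟩
  · exact ⟨a - 1, by omega, by omega⟩

theorem exists_unit_step_toward_of_natAbs_le {a b : ℤ} {k : ℕ} (h : (b - a).natAbs ≤ k + 1)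
    (hp : (b - a) % 2 = (k + 1 : ℕ) % 2) :
    ∃ c, (c - a).natAbs = 1 ∧ (b - c).natAbs ≤ k ∧ (b - c) % 2 = k % 2 := by
  obtain ⟨c, hc, hcb⟩ := exists_unit_step_toward a b
  exact ⟨c, hc, by omega, by omega⟩

theorem exists_blackLeft_supDist_le {u v : ℤ × ℤ} (huv : u ≠ v) :
    ∃ w, blackLeft u w ∧ supDist w v ≤ supDist u v := by
  rw [Ne, Prod.ext_iff] at huv
  simp only [blackLeft_iff, supDist]
  rcases Int.emod_two_eq_zero_or_one (u.1 + u.2) with hu | hu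
  · obtain ⟨c, hc, hcv⟩ := exists_unit_step_toward u.2 v.2
    exact ⟨(u.1, c), by omega, by omega⟩
  · obtain ⟨c, hc, hcv⟩ := exists_unit_step_toward u.1 v.1
    exact ⟨(c, u.2), by omega, by omega⟩

theorem two_mem_incPathLengths_of_diagonal {u v : ℤ × ℤ} (h1 : (v.1 - u.1).natAbs = 1)
    (h2 : (v.2 - u.2).natAbs = 1) : 2 ∈ incPathLengths u v := by
  simp only [succ_mem_incPathLengths_iff, zero_mem_incPathLengths_iff, blackLeft_iff]
  rcases Int.emod_two_eq_zero_or_one (u.1 + u.2) with hu | hu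
  · exact ⟨(u.1, v.2), by omega, v, by omega, rfl⟩
  · exact ⟨(v.1, u.2), by omega, v, by omega, rfl⟩

theorem two_mul_mem_incPathLengths (k : ℕ) {u v : ℤ × ℤ} (hk : supDist u v ≤ k)
    (h1 : (v.1 - u.1) % 2 = k % 2) (h2 : (v.2 - u.2) % 2 = k % 2) :
    2 * k ∈ incPathLengths u v := by
  obtain ⟨hk1, hk2⟩ := max_le_iff.1 hk
  induction k generalizing u with
  | zero =>
    rw [zero_mem_incPathLengths_iff]
    ext <;> omega
  | succ k ih =>
    obtain ⟨c1, hc1, hcv1, hp1⟩ := exists_unit_step_toward_of_natAbs_le (by omega) h1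
    obtain ⟨c2, hc2, hcv2, hp2⟩ := exists_unit_step_toward_of_natAbs_le (by omega) h2
    have hrest : 2 * k ∈ incPathLengths (c1, c2) v :=
      ih (max_le (by omega) (by omega)) hp1 hp2 (by omega) (by omega)
    rw [mul_add, add_comm]
    exact add_mem_incPathLengths (two_mem_incPathLengths_of_diagonal hc1 hc2) hrest

theorem two_mul_supDist_mem_incPathLengths {u v : ℤ × ℤ}
    (h : (u.1 + u.2) % 2 = (v.1 + v.2) % 2) : 2 * supDist u v ∈ incPathLengths u v :=
  two_mul_mem_incPathLengths _ le_rfl (by unfold supDist; omega) (by unfold supDist; omega)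

theorem exists_mem_incPathLengths_le (u v : ℤ × ℤ) :
    ∃ n ∈ incPathLengths u v, n ≤ 2 * supDist u v + 1 := by
  by_cases h : (u.1 + u.2) % 2 = (v.1 + v.2) % 2
  · exact ⟨_, two_mul_supDist_mem_incPathLengths h, by omega⟩
  · have huv : u ≠ v := by rintro rfl; exact h rfl
    obtain ⟨w, huw, hwv⟩ := exists_blackLeft_supDist_le huv
    have hw : (w.1 + w.2) % 2 = (v.1 + v.2) % 2 := by rw [blackLeft_iff] at huw; omega
    exact ⟨_, succ_mem_incPathLengths_iff.2 ⟨w, huw, two_mul_supDist_mem_incPathLengths hw⟩,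
      by omega⟩

/-- The minimal length of an increasing lattice path between two lattice
points differs by at most `1` from twice the sup-norm distance between them. -/
theorem min_increasing_path_length (u v : ℤ × ℤ) :
    (incPathLengths u v).Nonempty ∧
    |((sInf (incPathLengths u v) : ℕ) : ℤ) -
        2 * max (|u.1 - v.1|) (|u.2 - v.2|)| ≤ 1 := by
  obtain ⟨n, hn, hn_le⟩ := exists_mem_incPathLengths_le u v
  have hne : (incPathLengths u v).Nonempty := ⟨n, hn⟩
  have hupper := Nat.sInf_le hn
  have hlower := two_mul_supDist_le_of_mem_incPathLengths (Nat.sInf_mem hne)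
  refine ⟨hne, ?_⟩
  rw [← cast_supDist, abs_le]
  omega
end

section
/- Let θ0 ∈ (0,π) with θ0 ≠ π/2, and for each positive integer n let W be the set of n such that |θ0 - πj/n| > n^{-3/2} for all integers j. Then for all sufficiently large even n, at least one of n, n+2 belongs to W. -/
open Real

/-- The set of "good denominators" for `θ₀`: those `n` for which `θ₀/π` is
not well approximated by rationals with denominator `n`, in the sense that
`|θ₀ - πj/n| > n^(-3/2)` for every integer `j`. -/
def goodDenoms (θ₀ : ℝ) : Set ℕ :=
  {n | 0 < n ∧ ∀ j : ℤ, |θ₀ - π * j / n| > 1 / (n : ℝ) ^ ((3 : ℝ) / 2)}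

/-!
If neither `n` nor `n + 2` is a good denominator, then `n θ₀` and `(n + 2) θ₀` are both within
`1/√n` of `πℤ`, so `2 θ₀` is within `2/√n` of `πℤ`. Since `|x - kπ| ≥ |sin x|` for every integer
`k`, this forces `|sin 2θ₀| ≤ 2/√n`, which fails for large `n` because `sin 2θ₀ ≠ 0`.
-/

open Filter

lemma abs_sin_le_abs_sub_int_mul_pi (x : ℝ) (k : ℤ) : |sin x| ≤ |x - k * π| :=
  calc |sin x| = |sin (x - k * π)| := by
        rw [sin_sub_int_mul_pi, abs_mul, abs_zpow, abs_neg, abs_one, one_zpow, one_mul]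
    _ ≤ |x - k * π| := abs_sin_le_abs

lemma sin_two_mul_ne_zero_of_mem_Ioo {θ : ℝ} (hθ : θ ∈ Set.Ioo 0 π) (hhalf : θ ≠ π / 2) :
    sin (2 * θ) ≠ 0 := by
  intro h
  have h' : sin (2 * θ - π) = 0 := by rw [sin_sub_pi, h, neg_zero]
  rw [sin_eq_zero_iff_of_lt_of_lt (by linarith [hθ.1]) (by linarith [hθ.2])] at h'
  exact hhalf (by linarith)

lemma rpow_three_halves_eq_mul_sqrt {x : ℝ} (hx : 0 ≤ x) : x ^ ((3 : ℝ) / 2) = x * √x := by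
  rw [show (3 : ℝ) / 2 = 1 + 1 / 2 by norm_num, rpow_add' hx (by norm_num), rpow_one,
    ← sqrt_eq_rpow]

lemma exists_abs_mul_sub_int_mul_pi_le_of_notMem_goodDenoms {θ : ℝ} {n : ℕ} (hn : 0 < n)
    (h : n ∉ goodDenoms θ) : ∃ j : ℤ, |n * θ - j * π| ≤ 1 / √n := by
  simp only [goodDenoms, Set.mem_ofPred_eq, not_and, not_forall, not_lt] at h
  obtain ⟨j, hj⟩ := h hn
  have hn' : (0 : ℝ) < n := by exact_mod_cast hn
  refine ⟨j, ?_⟩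
  calc |n * θ - j * π| = n * |θ - π * j / n| := by
        rw [← abs_of_pos hn', ← abs_mul, abs_of_pos hn']
        congr 1
        field_simp
    _ ≤ n * (1 / (n * √n)) := by
        rw [← rpow_three_halves_eq_mul_sqrt hn'.le]
        gcongr
    _ = 1 / √n := by field_simp

/-- Lemma `halfin`:  for `θ₀ ∈ (0, π)` with `θ₀ ≠ π/2`, for every
sufficiently large even `n`, at least one of `n`, `n + 2` is a good
denominator for `θ₀`. -/
theorem halfin (θ₀ : ℝ) (h₀ : θ₀ ∈ Set.Ioo 0 π) (hhalf : θ₀ ≠ π / 2) :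
    ∃ N : ℕ, ∀ n ≥ N, Even n →
      n ∈ goodDenoms θ₀ ∨ n + 2 ∈ goodDenoms θ₀ := by
  have hsin : 0 < |sin (2 * θ₀)| := abs_pos.2 (sin_two_mul_ne_zero_of_mem_Ioo h₀ hhalf)
  have hlim : Tendsto (fun n : ℕ => 2 / √(n : ℝ)) atTop (nhds 0) :=
    tendsto_const_nhds.div_atTop (tendsto_sqrt_atTop.comp tendsto_natCast_atTop_atTop)
  obtain ⟨N, hN⟩ := eventually_atTop.1 (hlim.eventually (gt_mem_nhds hsin))
  refine ⟨N + 1, fun n hn _ => ?_⟩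
  by_contra! ⟨hbad, hbad₂⟩
  obtain ⟨j, hj⟩ := exists_abs_mul_sub_int_mul_pi_le_of_notMem_goodDenoms (by omega) hbad
  obtain ⟨j₂, hj₂⟩ := exists_abs_mul_sub_int_mul_pi_le_of_notMem_goodDenoms (by omega) hbad₂
  have hsqrt : 1 / √((n + 2 : ℕ) : ℝ) ≤ 1 / √n := by
    have : (0 : ℝ) < n := by exact_mod_cast (show 0 < n by omega)
    gcongr
    omega
  have := calc |sin (2 * θ₀)|
      ≤ |2 * θ₀ - ((j₂ - j : ℤ) : ℝ) * π| := abs_sin_le_abs_sub_int_mul_pi _ _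
    _ = |(((n + 2 : ℕ) : ℝ) * θ₀ - j₂ * π) - (n * θ₀ - j * π)| := by push_cast; ring_nf
    _ ≤ |((n + 2 : ℕ) : ℝ) * θ₀ - j₂ * π| + |n * θ₀ - j * π| := abs_sub _ _
    _ ≤ 1 / √n + 1 / √n := by linarith
    _ = 2 / √n := by ring
  exact (hN n (by omega)).not_ge this
end

section
/- Let a, c, b, d be the side lengths (in cyclic order a, c, b, d) of a cyclic quadrilateral, with each of a,b,c,d less than the sum of the other three. Then the circumradius r satisfies r^2 = (ab+cd)(ac+bd)(ad+bc) / ((a+b+c-d)(a+b-c+d)(a-b+c+d)(-a+b+c+d)). -/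
/-!
Put `x, z, y, w` for the halves of the arcs cut off by the sides `a, c, b, d`, so that
`x + y + z + w = π` and `a = 2r sin x`, `b = 2r sin y`, `c = 2r sin z`, `d = 2r sin w`.
In sine form, Ptolemy's theorem writes each of `ab + cd`, `ac + bd`, `ad + bc` as `(2r)²` times
a product of two of `sin (x + y)`, `sin (y + z)`, `sin (x + z)`. Sum-to-product formulas factor
each of `a + b + c - d`, … into half-angle sines, and the product of the four factors is
`4 (2r)⁴ (sin (x + y) sin (y + z) sin (x + z))²`. The quotient is therefore `r²`.
-/

open Complex

namespace Real

theorem sin_mul_sin_add_sin_mul_sin_of_add_eq_pi {α β γ δ : ℝ} (h : α + β + γ + δ = π) :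
    sin α * sin β + sin γ * sin δ = sin (α + γ) * sin (β + γ) := by
  rw [show δ = π - (α + β + γ) by linarith, sin_pi_sub]
  simp only [sin_add, cos_add]
  linear_combination -(sin α * sin β) * sin_sq_add_cos_sq γ

theorem sin_add_sin_add_sin_sub_sin_of_add_eq_pi {x y z w : ℝ} (h : x + y + z + w = π) :
    sin x + sin y + sin z - sin w =
      4 * sin ((x + y) / 2) * sin ((y + z) / 2) * sin ((x + z) / 2) := by
  have key : ∀ u v t : ℝ, sin (u - v + t) + sin (u + v - t) + sin (-u + v + t) - sin (u + v + t)
      = 4 * sin u * sin v * sin t := by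
    intro u v t
    simp only [sin_add, sin_sub, cos_add, cos_sub, sin_neg, cos_neg]
    ring
  -- `x, y, z` are `u - v + t, u + v - t, -u + v + t` for the three half-sums `u, v, t` on the right
  rw [show w = π - (x + y + z) by linarith, sin_pi_sub, ← key]
  ring_nf

theorem sin_perimeter_sub_mul_of_add_eq_pi {x y z w : ℝ} (h : x + y + z + w = π) :
    (sin x + sin y + sin z - sin w) * (sin x + sin y - sin z + sin w) *
      (sin x - sin y + sin z + sin w) * (-sin x + sin y + sin z + sin w) =
      4 * (sin (x + y) * sin (y + z) * sin (x + z)) ^ 2 := by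
  rw [show sin x + sin y - sin z + sin w = sin x + sin y + sin w - sin z by ring,
    show sin x - sin y + sin z + sin w = sin x + sin z + sin w - sin y by ring,
    show -sin x + sin y + sin z + sin w = sin y + sin z + sin w - sin x by ring,
    sin_add_sin_add_sin_sub_sin_of_add_eq_pi h,
    sin_add_sin_add_sin_sub_sin_of_add_eq_pi (show x + y + w + z = π by linarith),
    sin_add_sin_add_sin_sub_sin_of_add_eq_pi (show x + z + w + y = π by linarith),
    sin_add_sin_add_sin_sub_sin_of_add_eq_pi (show y + z + w + x = π by linarith)]
  have hzw : sin ((z + w) / 2) = cos ((x + y) / 2) := by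
    rw [← sin_pi_div_two_sub]; congr 1; linarith
  have hxw : sin ((x + w) / 2) = cos ((y + z) / 2) := by
    rw [← sin_pi_div_two_sub]; congr 1; linarith
  have hyw : sin ((y + w) / 2) = cos ((x + z) / 2) := by
    rw [← sin_pi_div_two_sub]; congr 1; linarith
  have half (t : ℝ) : sin t = 2 * sin (t / 2) * cos (t / 2) := by
    rw [← sin_two_mul]; ring_nf
  rw [half (x + y), half (y + z), half (x + z), ← hzw, ← hxw, ← hyw]
  ring

theorem circumradius_sq_of_sides_eq_two_mul_sin {a b c d r x y z w : ℝ} (hx : 0 < x) (hy : 0 < y)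
    (hz : 0 < z) (hw : 0 < w) (h : x + y + z + w = π) (ha : a = 2 * r * sin x)
    (hb : b = 2 * r * sin y) (hc : c = 2 * r * sin z) (hd : d = 2 * r * sin w) :
    r ^ 2 = (a * b + c * d) * (a * c + b * d) * (a * d + b * c) /
      ((a + b + c - d) * (a + b - c + d) * (a - b + c + d) * (-a + b + c + d)) := by
  subst ha hb hc hd
  set P := sin (x + y) * sin (y + z) * sin (x + z)
  have hP : P ≠ 0 := by
    have := sin_pos_of_pos_of_lt_pi (x := x + y) (by linarith) (by linarith)
    have := sin_pos_of_pos_of_lt_pi (x := y + z) (by linarith) (by linarith)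
    have := sin_pos_of_pos_of_lt_pi (x := x + z) (by linarith) (by linarith)
    positivity
  have hwy : sin (w + y) = sin (x + z) := by rw [← sin_pi_sub]; congr 1; linarith
  have hnum : (2 * r * sin x * (2 * r * sin y) + 2 * r * sin z * (2 * r * sin w)) *
      (2 * r * sin x * (2 * r * sin z) + 2 * r * sin y * (2 * r * sin w)) *
      (2 * r * sin x * (2 * r * sin w) + 2 * r * sin y * (2 * r * sin z)) =
      (2 * r) ^ 6 * P ^ 2 := by
    rw [show (2 * r) ^ 6 * P ^ 2 = (2 * r) ^ 6 * ((sin (x + z) * sin (y + z)) *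
      (sin (x + y) * sin (z + y)) * (sin (x + y) * sin (w + y))) by rw [hwy, add_comm z y]; ring,
      ← sin_mul_sin_add_sin_mul_sin_of_add_eq_pi h,
      ← sin_mul_sin_add_sin_mul_sin_of_add_eq_pi (show x + z + y + w = π by linarith),
      ← sin_mul_sin_add_sin_mul_sin_of_add_eq_pi (show x + w + y + z = π by linarith)]
    ring
  have hden : (2 * r * sin x + 2 * r * sin y + 2 * r * sin z - 2 * r * sin w) *
      (2 * r * sin x + 2 * r * sin y - 2 * r * sin z + 2 * r * sin w) *
      (2 * r * sin x - 2 * r * sin y + 2 * r * sin z + 2 * r * sin w) *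
      (-(2 * r * sin x) + 2 * r * sin y + 2 * r * sin z + 2 * r * sin w) =
      (2 * r) ^ 4 * (4 * P ^ 2) := by
    rw [← sin_perimeter_sub_mul_of_add_eq_pi h]
    ring
  rw [hnum, hden]
  rcases eq_or_ne r 0 with rfl | hr
  · simp
  · field_simp
    ring

end Real

theorem norm_sub_eq_two_mul_abs_sin (o : ℂ) {r : ℝ} (hr : 0 ≤ r) (φ ψ : ℝ) :
    ‖o + r * exp (ψ * I) - (o + r * exp (φ * I))‖ = 2 * r * |Real.sin ((ψ - φ) / 2)| := by
  have : o + r * exp (ψ * I) - (o + r * exp (φ * I))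
      = r * exp (φ * I) * (exp (I * ↑(ψ - φ)) - 1) := by
    rw [mul_sub, mul_one, mul_assoc, ← exp_add]
    push_cast
    ring_nf
  rw [this, norm_mul, norm_mul, norm_exp_ofReal_mul_I, norm_exp_I_mul_ofReal_sub_one, norm_real,
    norm_mul, Real.norm_of_nonneg hr, Real.norm_two, Real.norm_eq_abs]
  ring

theorem cyclic_quadrilateral_circumradius_general (a b c d r : ℝ) (o : ℂ)
    (θ : Fin 4 → ℝ)
    (hr : 0 < r)
    (horder : θ 0 < θ 1 ∧ θ 1 < θ 2 ∧ θ 2 < θ 3 ∧ θ 3 < θ 0 + 2 * Real.pi)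
    (hside_a : Norm.norm (o + r * Complex.exp (θ 1 * Complex.I) -
      (o + r * Complex.exp (θ 0 * Complex.I))) = a)
    (hside_c : Norm.norm (o + r * Complex.exp (θ 2 * Complex.I) -
      (o + r * Complex.exp (θ 1 * Complex.I))) = c)
    (hside_b : Norm.norm (o + r * Complex.exp (θ 3 * Complex.I) -
      (o + r * Complex.exp (θ 2 * Complex.I))) = b)
    (hside_d : Norm.norm (o + r * Complex.exp (θ 0 * Complex.I) -
      (o + r * Complex.exp (θ 3 * Complex.I))) = d) :
    r ^ 2 = (a * b + c * d) * (a * c + b * d) * (a * d + b * c) /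
      ((a + b + c - d) * (a + b - c + d) * (a - b + c + d) *
        (-a + b + c + d)) := by
  obtain ⟨h01, h12, h23, h30⟩ := horder
  have chord {φ ψ : ℝ} (hφψ : φ < ψ) (hψφ : ψ < φ + 2 * Real.pi) :
      ‖o + r * exp (ψ * I) - (o + r * exp (φ * I))‖ = 2 * r * Real.sin ((ψ - φ) / 2) := by
    rw [norm_sub_eq_two_mul_abs_sin o hr.le,
      abs_of_pos (Real.sin_pos_of_pos_of_lt_pi (by linarith) (by linarith))]
  refine Real.circumradius_sq_of_sides_eq_two_mul_sin
    (x := (θ 1 - θ 0) / 2) (y := (θ 3 - θ 2) / 2) (z := (θ 2 - θ 1) / 2)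
    (w := (θ 0 + 2 * Real.pi - θ 3) / 2)
    (by linarith) (by linarith) (by linarith) (by linarith) (by ring) ?_ ?_ ?_ ?_
  · rw [← hside_a, chord h01 (by linarith)]
  · rw [← hside_b, chord h23 (by linarith)]
  · rw [← hside_c, chord h12 (by linarith)]
  · rw [← hside_d, norm_sub_eq_two_mul_abs_sin o hr.le,
      show (θ 0 - θ 3) / 2 = (θ 0 + 2 * Real.pi - θ 3) / 2 - Real.pi by ring, Real.sin_sub_pi,
      abs_neg, abs_of_pos (Real.sin_pos_of_pos_of_lt_pi (by linarith) (by linarith))]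

/-- Circumradius of a cyclic quadrilateral:  if four points lie in cyclic
order on a circle of radius `r` (centre `o`), with consecutive side lengths
`a, c, b, d`, and each of `a, b, c, d` is less than the sum of the other
three, then
`r² = (ab+cd)(ac+bd)(ad+bc) / ((a+b+c-d)(a+b-c+d)(a-b+c+d)(-a+b+c+d))`. -/
theorem cyclic_quadrilateral_circumradius (a b c d r : ℝ) (o : ℂ)
    (θ : Fin 4 → ℝ)
    (hr : 0 < r)
    (ha : 0 < a) (hb : 0 < b) (hc : 0 < c) (hd : 0 < d)
    (h₁ : a < b + c + d) (h₂ : b < a + c + d)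
    (h₃ : c < a + b + d) (h₄ : d < a + b + c)
    (horder : θ 0 < θ 1 ∧ θ 1 < θ 2 ∧ θ 2 < θ 3 ∧ θ 3 < θ 0 + 2 * Real.pi)
    (hside_a : Norm.norm (o + r * Complex.exp (θ 1 * Complex.I) -
      (o + r * Complex.exp (θ 0 * Complex.I))) = a)
    (hside_c : Norm.norm (o + r * Complex.exp (θ 2 * Complex.I) -
      (o + r * Complex.exp (θ 1 * Complex.I))) = c)
    (hside_b : Norm.norm (o + r * Complex.exp (θ 3 * Complex.I) -
      (o + r * Complex.exp (θ 2 * Complex.I))) = b)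
    (hside_d : Norm.norm (o + r * Complex.exp (θ 0 * Complex.I) -
      (o + r * Complex.exp (θ 3 * Complex.I))) = d) :
    r ^ 2 = (a * b + c * d) * (a * c + b * d) * (a * d + b * c) /
      ((a + b + c - d) * (a + b - c + d) * (a - b + c + d) *
        (-a + b + c + d)) :=
  cyclic_quadrilateral_circumradius_general a b c d r o θ hr horder hside_a hside_c hside_b hside_d
end

section
/- For positive reals a, b, c, d with each less than the sum of the other three, let p_a = (1/π)·arcsin( a·√((a+b+c-d)(a+b-c+d)(a-b+c+d)(-a+b+c+d)) / (2·√((ab+cd)(ac+bd)(ad+bc))) ) be the normalized arc angle cut off by side a of the cyclic quadrilateral with sides a,c,b,d in cyclic order, and define p_b, p_c, p_d analogously. Then p_a + p_b + p_c + p_d = 1. -/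
/-!
Let `θ_x` be half the arc cut off by the side `x`, so that `sin θ_x = x / (2ρ)` for the
circumradius `ρ`, and `ρ² = P / K` with `K = brahmaguptaProd a b c d` and
`P = parameshvaraProd a b c d`. The cosines are no worse: `4P - x²K` is the square of a
polynomial `N_x = halfArcCosNum x y z w`, so `θ_x = arccos (N_x / (2√P))`. Two polynomial
identities finish the proof: `N_a + N_b > 0` gives `θ_a + θ_b < π` (likewise for `c, d`), and
`N_a N_b + N_c N_d = (ab + cd) K` says `cos (θ_a + θ_b) = -cos (θ_c + θ_d)`, hence
`θ_a + θ_b + θ_c + θ_d = π`.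
-/

open Real Set

section UpperSemicircle

variable {r X Y : ℝ}

lemma div_mem_Icc_of_sq_add_sq (hr : 0 < r) (h : X ^ 2 + Y ^ 2 = r ^ 2) :
    X / r ∈ Icc (-1) 1 := by
  have hsq : (X / r) ^ 2 ≤ 1 := by
    rw [div_pow, div_le_one (by positivity)]
    nlinarith [sq_nonneg Y]
  exact abs_le.mp ((sq_le_one_iff_abs_le_one _).mp hsq)

lemma cos_arccos_div_of_sq_add_sq (hr : 0 < r) (h : X ^ 2 + Y ^ 2 = r ^ 2) :
    cos (arccos (X / r)) = X / r :=
  have hX := div_mem_Icc_of_sq_add_sq hr h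
  cos_arccos hX.1 hX.2

lemma sin_arccos_div_of_sq_add_sq (hr : 0 < r) (hY : 0 ≤ Y) (h : X ^ 2 + Y ^ 2 = r ^ 2) :
    sin (arccos (X / r)) = Y / r := by
  have hsq : 1 - (X / r) ^ 2 = (Y / r) ^ 2 := by
    field_simp
    linarith
  rw [sin_arccos, hsq, sqrt_sq (by positivity)]

end UpperSemicircle

lemma arccos_add_arccos_lt_pi {u v : ℝ} (hu : u ≤ 1) (hv : v ≤ 1) (h : 0 < u + v) :
    arccos u + arccos v < π := by
  have : arccos u < arccos (-v) := arccos_lt_arccos (by linarith) (by linarith) hu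
  rw [arccos_neg] at this
  linarith

lemma eq_pi_sub_of_cos_eq_neg_cos {x y : ℝ} (hx₀ : 0 ≤ x) (hx₁ : x ≤ π) (hy₀ : 0 ≤ y)
    (hy₁ : y ≤ π) (h : cos x = -cos y) : x = π - y := by
  rw [← arccos_cos hx₀ hx₁, h, arccos_neg, arccos_cos hy₀ hy₁]

lemma sq_add_mul_sqrt_sq {K P N x : ℝ} (hK : 0 ≤ K) (hP : 0 ≤ P)
    (h : N ^ 2 + x ^ 2 * K = 4 * P) :
    N ^ 2 + (x * √K) ^ 2 = (2 * √P) ^ 2 := by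
  rw [mul_pow, mul_pow, sq_sqrt hK, sq_sqrt hP]
  linarith

lemma arccos_div_pi_mem_Icc (x : ℝ) : arccos x / π ∈ Icc 0 1 :=
  ⟨div_nonneg (arccos_nonneg x) pi_pos.le, (div_le_one pi_pos).mpr (arccos_le_pi x)⟩

section ArccosPairs

variable {r X₁ X₂ X₃ X₄ Y₁ Y₂ Y₃ Y₄ : ℝ}

lemma cos_arccos_div_add_arccos_div (hr : 0 < r) (hY₁ : 0 ≤ Y₁) (hY₂ : 0 ≤ Y₂)
    (h₁ : X₁ ^ 2 + Y₁ ^ 2 = r ^ 2) (h₂ : X₂ ^ 2 + Y₂ ^ 2 = r ^ 2) :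
    cos (arccos (X₁ / r) + arccos (X₂ / r)) = (X₁ * X₂ - Y₁ * Y₂) / r ^ 2 := by
  rw [cos_add, cos_arccos_div_of_sq_add_sq hr h₁, cos_arccos_div_of_sq_add_sq hr h₂,
    sin_arccos_div_of_sq_add_sq hr hY₁ h₁, sin_arccos_div_of_sq_add_sq hr hY₂ h₂]
  ring

lemma arccos_div_add_arccos_div_lt_pi (hr : 0 < r) (h₁ : X₁ ^ 2 + Y₁ ^ 2 = r ^ 2)
    (h₂ : X₂ ^ 2 + Y₂ ^ 2 = r ^ 2) (h₁₂ : 0 < X₁ + X₂) :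
    arccos (X₁ / r) + arccos (X₂ / r) < π :=
  arccos_add_arccos_lt_pi (div_mem_Icc_of_sq_add_sq hr h₁).2 (div_mem_Icc_of_sq_add_sq hr h₂).2
    (by rw [← add_div]; positivity)

theorem arccos_div_add_arccos_div_eq_pi_sub (hr : 0 < r)
    (hY₁ : 0 ≤ Y₁) (hY₂ : 0 ≤ Y₂) (hY₃ : 0 ≤ Y₃) (hY₄ : 0 ≤ Y₄)
    (h₁ : X₁ ^ 2 + Y₁ ^ 2 = r ^ 2) (h₂ : X₂ ^ 2 + Y₂ ^ 2 = r ^ 2)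
    (h₃ : X₃ ^ 2 + Y₃ ^ 2 = r ^ 2) (h₄ : X₄ ^ 2 + Y₄ ^ 2 = r ^ 2)
    (h₁₂ : 0 < X₁ + X₂) (h₃₄ : 0 < X₃ + X₄)
    (h : X₁ * X₂ - Y₁ * Y₂ = -(X₃ * X₄ - Y₃ * Y₄)) :
    arccos (X₁ / r) + arccos (X₂ / r) = π - (arccos (X₃ / r) + arccos (X₄ / r)) := by
  refine eq_pi_sub_of_cos_eq_neg_cos (add_nonneg (arccos_nonneg _) (arccos_nonneg _))
    (arccos_div_add_arccos_div_lt_pi hr h₁ h₂ h₁₂).le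
    (add_nonneg (arccos_nonneg _) (arccos_nonneg _))
    (arccos_div_add_arccos_div_lt_pi hr h₃ h₄ h₃₄).le ?_
  rw [cos_arccos_div_add_arccos_div hr hY₁ hY₂ h₁ h₂,
    cos_arccos_div_add_arccos_div hr hY₃ hY₄ h₃ h₄, h, neg_div]

end ArccosPairs

/-- Sixteen times the squared area of the cyclic quadrilateral (Brahmagupta). -/
def brahmaguptaProd (a b c d : ℝ) : ℝ :=
  (a + b + c - d) * (a + b - c + d) * (a - b + c + d) * (-a + b + c + d)

/-- The circumradius of the cyclic quadrilateral is `√(parameshvaraProd / brahmaguptaProd)`. -/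
def parameshvaraProd (a b c d : ℝ) : ℝ :=
  (a * b + c * d) * (a * c + b * d) * (a * d + b * c)

/-- `2 √P cos θ_x` for the half arc `θ_x` over the side `x`, the other sides being `y, z, w`. -/
def halfArcCosNum (x y z w : ℝ) : ℝ :=
  x * (y ^ 2 + z ^ 2 + w ^ 2 - x ^ 2) + 2 * y * z * w

section Quadrilateral

variable {a b c d : ℝ}

lemma brahmaguptaProd_pos (h₁ : a < b + c + d) (h₂ : b < a + c + d) (h₃ : c < a + b + d)
    (h₄ : d < a + b + c) : 0 < brahmaguptaProd a b c d :=
  mul_pos (mul_pos (mul_pos (by linarith) (by linarith)) (by linarith)) (by linarith)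

lemma parameshvaraProd_pos (ha : 0 < a) (hb : 0 < b) (hc : 0 < c) (hd : 0 < d) :
    0 < parameshvaraProd a b c d := by
  unfold parameshvaraProd
  positivity

lemma halfArcCosNum_add_pos (ha : 0 < a) (hb : 0 < b) (h₁ : a < b + c + d)
    (h₂ : b < a + c + d) : 0 < halfArcCosNum a b c d + halfArcCosNum b a c d := by
  have : halfArcCosNum a b c d + halfArcCosNum b a c d
      = (a + b) * (a - b + c + d) * (b - a + c + d) := by
    unfold halfArcCosNum
    ring
  rw [this]
  exact mul_pos (mul_pos (by linarith) (by linarith)) (by linarith)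

variable (a b c d)

lemma halfArcCosNum_sq_add_sq_mul_brahmaguptaProd :
    halfArcCosNum a b c d ^ 2 + a ^ 2 * brahmaguptaProd a b c d = 4 * parameshvaraProd a b c d ∧
    halfArcCosNum b a c d ^ 2 + b ^ 2 * brahmaguptaProd a b c d = 4 * parameshvaraProd a b c d ∧
    halfArcCosNum c d a b ^ 2 + c ^ 2 * brahmaguptaProd a b c d = 4 * parameshvaraProd a b c d ∧
    halfArcCosNum d c a b ^ 2 + d ^ 2 * brahmaguptaProd a b c d = 4 * parameshvaraProd a b c d := by
  unfold halfArcCosNum brahmaguptaProd parameshvaraProd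
  refine ⟨by ring, by ring, by ring, by ring⟩

lemma halfArcCosNum_mul_add_mul :
    halfArcCosNum a b c d * halfArcCosNum b a c d + halfArcCosNum c d a b * halfArcCosNum d c a b
      = (a * b + c * d) * brahmaguptaProd a b c d := by
  unfold halfArcCosNum brahmaguptaProd
  ring

end Quadrilateral


/-- For positive `a, b, c, d`, each less than the sum of the other three,
there are normalized arc angles `p_a, p_b, p_c, p_d ∈ [0,1]` (the arcs cut
off by the sides of the cyclic quadrilateral with sides `a, c, b, d` in
cyclic order, with the branch of arcsine determined by the geometry) with
`sin(π p_x) = x·√((a+b+c-d)(a+b-c+d)(a-b+c+d)(-a+b+c+d)) /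
  (2√((ab+cd)(ac+bd)(ad+bc)))`
for each `x ∈ {a, b, c, d}`, and `p_a + p_b + p_c + p_d = 1`. -/
theorem arc_probabilities_sum_to_one (a b c d : ℝ)
    (ha : 0 < a) (hb : 0 < b) (hc : 0 < c) (hd : 0 < d)
    (h₁ : a < b + c + d) (h₂ : b < a + c + d)
    (h₃ : c < a + b + d) (h₄ : d < a + b + c) :
    ∃ pa pb pc pd : ℝ,
      pa ∈ Set.Icc (0 : ℝ) 1 ∧ pb ∈ Set.Icc (0 : ℝ) 1 ∧
      pc ∈ Set.Icc (0 : ℝ) 1 ∧ pd ∈ Set.Icc (0 : ℝ) 1 ∧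
      sin (π * pa) = a * Real.sqrt ((a + b + c - d) * (a + b - c + d) *
          (a - b + c + d) * (-a + b + c + d)) /
        (2 * Real.sqrt ((a * b + c * d) * (a * c + b * d) * (a * d + b * c))) ∧
      sin (π * pb) = b * Real.sqrt ((a + b + c - d) * (a + b - c + d) *
          (a - b + c + d) * (-a + b + c + d)) /
        (2 * Real.sqrt ((a * b + c * d) * (a * c + b * d) * (a * d + b * c))) ∧
      sin (π * pc) = c * Real.sqrt ((a + b + c - d) * (a + b - c + d) *
          (a - b + c + d) * (-a + b + c + d)) /
        (2 * Real.sqrt ((a * b + c * d) * (a * c + b * d) * (a * d + b * c))) ∧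
      sin (π * pd) = d * Real.sqrt ((a + b + c - d) * (a + b - c + d) *
          (a - b + c + d) * (-a + b + c + d)) /
        (2 * Real.sqrt ((a * b + c * d) * (a * c + b * d) * (a * d + b * c))) ∧
      pa + pb + pc + pd = 1 := by
  have hK := brahmaguptaProd_pos h₁ h₂ h₃ h₄
  have hP := parameshvaraProd_pos ha hb hc hd
  set r := 2 * √(parameshvaraProd a b c d)
  have hr : 0 < r := by positivity
  obtain ⟨hcirca, hcircb, hcircc, hcircd⟩ := halfArcCosNum_sq_add_sq_mul_brahmaguptaProd a b c d
  replace hcirca := sq_add_mul_sqrt_sq hK.le hP.le hcirca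
  replace hcircb := sq_add_mul_sqrt_sq hK.le hP.le hcircb
  replace hcircc := sq_add_mul_sqrt_sq hK.le hP.le hcircc
  replace hcircd := sq_add_mul_sqrt_sq hK.le hP.le hcircd
  have hsum := arccos_div_add_arccos_div_eq_pi_sub hr (by positivity) (by positivity)
    (by positivity) (by positivity) hcirca hcircb hcircc hcircd
    (halfArcCosNum_add_pos ha hb h₁ h₂)
    (halfArcCosNum_add_pos hc hd (by linarith) (by linarith))
    (by linear_combination halfArcCosNum_mul_add_mul a b c d - (a * b + c * d) * sq_sqrt hK.le)
  refine ⟨arccos (halfArcCosNum a b c d / r) / π, arccos (halfArcCosNum b a c d / r) / π,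
    arccos (halfArcCosNum c d a b / r) / π, arccos (halfArcCosNum d c a b / r) / π,
    arccos_div_pi_mem_Icc _, arccos_div_pi_mem_Icc _, arccos_div_pi_mem_Icc _,
    arccos_div_pi_mem_Icc _, ?_, ?_, ?_, ?_, ?_⟩
  · rw [mul_div_cancel₀ _ pi_ne_zero]
    exact sin_arccos_div_of_sq_add_sq hr (by positivity) hcirca
  · rw [mul_div_cancel₀ _ pi_ne_zero]
    exact sin_arccos_div_of_sq_add_sq hr (by positivity) hcircb
  · rw [mul_div_cancel₀ _ pi_ne_zero]
    exact sin_arccos_div_of_sq_add_sq hr (by positivity) hcircc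
  · rw [mul_div_cancel₀ _ pi_ne_zero]
    exact sin_arccos_div_of_sq_add_sq hr (by positivity) hcircd
  · rw [← add_div, ← add_div, ← add_div, div_eq_one_iff_eq pi_ne_zero]
    linarith
end
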